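/- Fix a nonempty subset I ⊆ S. Define marginal recombination rates ρ^{(I)}_H := ∑_{G ⊆ S, G∩I = H} ρ_G for H ⊆ I (these satisfy ρ^{(I)}_H = ρ^{(I)}_{I∖H}), and let 𝒢_I, M_I, B_I be the recombination, mutation and resampling generators on functions of marginal configurations ℤ^{X_I} → ℝ, built exactly as 𝒢, M, B but with site set I, rates ρ^{(I)}_H/(4N), the mutation rates μ^i for i ∈ I, and the same b and N (the terms of 𝒢_I with H ∈ {∅, I} contribute zero since the corresponding jump vectors vanish). Then for every function h : ℤ^{X_I} → ℝ and every z : X → ℤ, ((𝒢 + M + B)(h ∘ (π_I.·)))(z) = ((𝒢_I + M_I + B_I) h)(π_I.z). In particular, the marginal process (π_I.Z_t) of the Moran model with recombination, mutation and resampling is itself a Markov chain of the same type on the site set I (lumping). -/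
import Mathlib


open scoped Classical

noncomputable section

namespace MoranRecomb

section generic

variable {ι : Type*} [Fintype ι] [DecidableEq ι] {Y : ι → Type*} [∀ i, Fintype (Y i)]

/-- The recombination map `p_G`: alleles at sites in `G` from `x`, elsewhere from `y`. -/
def recMap (G : Finset ι) (x y : ∀ i, Y i) : ∀ i, Y i :=
  fun i => if i ∈ G then x i else y i

/-- The delta (point) counting measure. -/
def delta {α : Type*} (x : α) : α → ℤ := fun w => if w = x then 1 else 0

/-- The jump vector `v_{G,x,y} = δ_{p_G(x,y)} + δ_{p_Ḡ(x,y)} - δ_x - δ_y` of a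
recombination event. -/
def jump (G : Finset ι) (x y : ∀ i, Y i) : (∀ i, Y i) → ℤ :=
  fun w => delta (recMap G x y) w + delta (recMap Gᶜ x y) w - delta x w - delta y w

/-- The recombination generator `𝒢` (for site set `ι`, rates `ρ_G/(4N)`). -/
def recGen (ρ : Finset ι → ℝ) (N : ℝ) (f : ((∀ i, Y i) → ℤ) → ℝ)
    (z : (∀ i, Y i) → ℤ) : ℝ :=
  ∑ G : Finset ι, ∑ x : ∀ i, Y i, ∑ y : ∀ i, Y i,
    ρ G / (4 * N) * (z x : ℝ) * (z y : ℝ) * (f (z + jump G x y) - f z)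

/-- The mutation generator `M` (for site set `ι`, mutation rates `μ`). -/
def mutGen (μ : ∀ i, Y i → Y i → ℝ) (f : ((∀ i, Y i) → ℤ) → ℝ)
    (z : (∀ i, Y i) → ℤ) : ℝ :=
  ∑ i : ι, ∑ x : ∀ j, Y j, ∑ b : Y i,
    μ i (x i) b * (z x : ℝ) * (f (z - delta x + delta (Function.update x i b)) - f z)

/-- The resampling generator `B` with rate `b`. -/
def resGen (b N : ℝ) (f : ((∀ i, Y i) → ℤ) → ℝ) (z : (∀ i, Y i) → ℤ) : ℝ :=
  ∑ x : ∀ i, Y i, ∑ y : ∀ i, Y i,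
    b / (2 * N) * (z x : ℝ) * (z y : ℝ) * (f (z + delta x - delta y) - f z)

end generic

variable {n : ℕ} {Xa : Fin n → Type*}

/-- The canonical projection `π_I` onto the marginal type space `X_I`. -/
def projI (I : Finset (Fin n)) (x : ∀ i, Xa i) : ∀ i : {j // j ∈ I}, Xa i.val :=
  fun i => x i.val

/-- The marginal configuration `π_I.z ∈ ℤ^{X_I}` of a configuration `z ∈ ℤ^X`. -/
def margI [∀ i, Fintype (Xa i)] (I : Finset (Fin n)) (z : (∀ i, Xa i) → ℤ) :
    (∀ i : {j // j ∈ I}, Xa i.val) → ℤ :=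
  fun u => ∑ y : ∀ i, Xa i, if projI I y = u then z y else 0

section lemmas

variable [∀ i, Fintype (Xa i)] (I : Finset (Fin n))

lemma margI_add (z w : (∀ i, Xa i) → ℤ) :
    margI I (z + w) = margI I z + margI I w := by
  funext u
  simp only [margI, Pi.add_apply]
  rw [← Finset.sum_add_distrib]
  exact Finset.sum_congr rfl fun y _ => by split_ifs <;> simp

lemma margI_sub (z w : (∀ i, Xa i) → ℤ) :
    margI I (z - w) = margI I z - margI I w := by
  funext u
  simp only [margI, Pi.sub_apply]
  rw [← Finset.sum_sub_distrib]
  exact Finset.sum_congr rfl fun y _ => by split_ifs <;> simp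

lemma margI_delta (x : ∀ i, Xa i) : margI I (delta x) = delta (projI I x) := by
  funext u
  simp only [margI, delta]
  rw [Finset.sum_eq_single x]
  · by_cases hx : projI I x = u
    · simp [hx]
    · rw [if_neg hx, if_neg fun hh => hx hh.symm]
  · intro y _ hyx; simp [hyx]
  · intro hx; exact absurd (Finset.mem_univ x) hx

lemma projI_recMap (G : Finset (Fin n)) (x y : ∀ i, Xa i) :
    projI I (recMap G x y) = recMap (G.subtype (· ∈ I)) (projI I x) (projI I y) := by
  funext i
  simp [projI, recMap, Finset.mem_subtype]

lemma projI_recMap_compl (G : Finset (Fin n)) (x y : ∀ i, Xa i) :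
    projI I (recMap Gᶜ x y) = recMap (G.subtype (· ∈ I))ᶜ (projI I x) (projI I y) := by
  funext i
  simp [projI, recMap, Finset.mem_subtype, Finset.mem_compl]

lemma margI_jump (z : (∀ i, Xa i) → ℤ) (G : Finset (Fin n)) (x y : ∀ i, Xa i) :
    margI I (z + jump G x y)
      = margI I z + jump (G.subtype (· ∈ I)) (projI I x) (projI I y) := by
  have hj : z + jump G x y
      = z + delta (recMap G x y) + delta (recMap Gᶜ x y) - delta x - delta y := by
    funext w
    simp only [Pi.add_apply, Pi.sub_apply, jump]
    ring
  rw [hj, margI_sub, margI_sub, margI_add, margI_add, margI_delta, margI_delta,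
    margI_delta, margI_delta, projI_recMap, projI_recMap_compl]
  funext w
  simp only [Pi.add_apply, Pi.sub_apply, jump]
  ring

lemma sum_margI (z : (∀ i, Xa i) → ℤ) (g : (∀ i : {j // j ∈ I}, Xa i.val) → ℝ) :
    ∑ x : ∀ i, Xa i, (z x : ℝ) * g (projI I x)
      = ∑ u : ∀ i : {j // j ∈ I}, Xa i.val, (margI I z u : ℝ) * g u := by
  have hm : ∀ u, (margI I z u : ℝ) = ∑ y : ∀ i, Xa i,
      if projI I y = u then (z y : ℝ) else 0 := by
    intro u
    simp only [margI]
    push_cast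
    rfl
  simp_rw [hm, Finset.sum_mul, ite_mul, zero_mul]
  rw [Finset.sum_comm]
  refine Finset.sum_congr rfl fun x _ => ?_
  rw [Finset.sum_ite_eq]
  simp

lemma sum_margI2 (z : (∀ i, Xa i) → ℤ) (c : ℝ)
    (g : (∀ i : {j // j ∈ I}, Xa i.val) → (∀ i : {j // j ∈ I}, Xa i.val) → ℝ) :
    ∑ x : ∀ i, Xa i, ∑ y : ∀ i, Xa i,
        c * (z x : ℝ) * (z y : ℝ) * g (projI I x) (projI I y)
      = ∑ u : ∀ i : {j // j ∈ I}, Xa i.val, ∑ v : ∀ i : {j // j ∈ I}, Xa i.val,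
        c * (margI I z u : ℝ) * (margI I z v : ℝ) * g u v := by
  calc ∑ x : ∀ i, Xa i, ∑ y : ∀ i, Xa i,
        c * (z x : ℝ) * (z y : ℝ) * g (projI I x) (projI I y)
      = ∑ x : ∀ i, Xa i, (z x : ℝ) *
          ∑ y : ∀ i, Xa i, (z y : ℝ) * (c * g (projI I x) (projI I y)) := by
        refine Finset.sum_congr rfl fun x _ => ?_
        rw [Finset.mul_sum]
        exact Finset.sum_congr rfl fun y _ => by ring
    _ = ∑ x : ∀ i, Xa i, (z x : ℝ) *
          ∑ v : ∀ i : {j // j ∈ I}, Xa i.val,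
            (margI I z v : ℝ) * (c * g (projI I x) v) := by
        refine Finset.sum_congr rfl fun x _ => ?_
        exact congrArg _ (sum_margI I z fun v => c * g (projI I x) v)
    _ = ∑ u : ∀ i : {j // j ∈ I}, Xa i.val, (margI I z u : ℝ) *
          ∑ v : ∀ i : {j // j ∈ I}, Xa i.val, (margI I z v : ℝ) * (c * g u v) :=
        sum_margI I z fun u => ∑ v : ∀ i : {j // j ∈ I}, Xa i.val,
          (margI I z v : ℝ) * (c * g u v)
    _ = _ := by
        refine Finset.sum_congr rfl fun u _ => ?_
        rw [Finset.mul_sum]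
        exact Finset.sum_congr rfl fun v _ => by ring

lemma subtype_eq_iff (G : Finset (Fin n)) (H : Finset {j // j ∈ I}) :
    G ∩ I = H.image Subtype.val ↔ G.subtype (· ∈ I) = H := by
  constructor
  · intro hGH
    ext i
    simp only [Finset.mem_subtype]
    have h1 : i.val ∈ G ↔ i.val ∈ G ∩ I := by simp [Finset.mem_inter, i.2]
    rw [h1, hGH, Finset.mem_image]
    constructor
    · rintro ⟨b, hb, hbi⟩; rwa [← Subtype.ext hbi]
    · intro hi; exact ⟨i, hi, rfl⟩
  · rintro rfl
    ext a
    simp only [Finset.mem_inter, Finset.mem_image, Finset.mem_subtype, Subtype.exists]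
    constructor
    · rintro ⟨hG, hIa⟩; exact ⟨a, hIa, hG, rfl⟩
    · rintro ⟨b, hb, hG, rfl⟩; exact ⟨hG, hb⟩

lemma sum_fiber (ρ : Finset (Fin n) → ℝ) (F : Finset {j // j ∈ I} → ℝ) :
    ∑ G : Finset (Fin n), ρ G * F (G.subtype (· ∈ I))
      = ∑ H : Finset {j // j ∈ I},
          (∑ G ∈ Finset.univ.filter
            (fun G : Finset (Fin n) => G ∩ I = H.image Subtype.val), ρ G) * F H := by
  simp_rw [Finset.sum_mul, Finset.sum_filter, subtype_eq_iff I]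
  rw [Finset.sum_comm]
  refine Finset.sum_congr rfl fun G _ => ?_
  rw [Finset.sum_ite_eq]
  simp

lemma projI_update_mem {i : Fin n} (hi : i ∈ I) (x : ∀ j, Xa j) (c : Xa i) :
    projI I (Function.update x i c) = Function.update (projI I x) ⟨i, hi⟩ c := by
  funext j
  by_cases hj : j = (⟨i, hi⟩ : {j // j ∈ I})
  · subst hj
    simp [projI]
  · have hji : (j : Fin n) ≠ i := fun hh => hj (Subtype.ext hh)
    rw [Function.update_of_ne hj]
    show Function.update x i c j.val = projI I x j
    rw [Function.update_of_ne hji]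
    rfl

lemma projI_update_notMem {i : Fin n} (hi : i ∉ I) (x : ∀ j, Xa j) (c : Xa i) :
    projI I (Function.update x i c) = projI I x := by
  funext j
  have hji : (j : Fin n) ≠ i := fun hh => hi (hh ▸ j.2)
  show Function.update x i c j.val = x j.val
  rw [Function.update_of_ne hji]

lemma margI_mut (z : (∀ i, Xa i) → ℤ) (x x' : ∀ i, Xa i) :
    margI I (z - delta x + delta x')
      = margI I z - delta (projI I x) + delta (projI I x') := by
  rw [margI_add, margI_sub, margI_delta, margI_delta]

lemma res_eq (b N : ℝ) (h : ((∀ i : {j // j ∈ I}, Xa i.val) → ℤ) → ℝ)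
    (z : (∀ i, Xa i) → ℤ) :
    resGen b N (fun w => h (margI I w)) z = resGen b N h (margI I z) := by
  unfold resGen
  have key : ∀ x y : ∀ i, Xa i, margI I (z + delta x - delta y)
      = margI I z + delta (projI I x) - delta (projI I y) := fun x y => by
    rw [margI_sub, margI_add, margI_delta, margI_delta]
  simp only [key]
  exact sum_margI2 I z (b / (2 * N))
    (fun u v => h (margI I z + delta u - delta v) - h (margI I z))

lemma rec_eq (ρ : Finset (Fin n) → ℝ) (N : ℝ)
    (h : ((∀ i : {j // j ∈ I}, Xa i.val) → ℤ) → ℝ) (z : (∀ i, Xa i) → ℤ) :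
    recGen ρ N (fun w => h (margI I w)) z
      = recGen (fun H : Finset {j // j ∈ I} =>
          ∑ G ∈ Finset.univ.filter
            (fun G : Finset (Fin n) => G ∩ I = H.image Subtype.val), ρ G)
        N h (margI I z) := by
  unfold recGen
  simp only [margI_jump I z]
  set F : Finset {j // j ∈ I} → ℝ := fun H =>
    ∑ u : ∀ i : {j // j ∈ I}, Xa i.val, ∑ v : ∀ i : {j // j ∈ I}, Xa i.val,
      1 / (4 * N) * (margI I z u : ℝ) * (margI I z v : ℝ) *
        (h (margI I z + jump H u v) - h (margI I z)) with hF
  have hmul : ∀ (r : ℝ) (H : Finset {j // j ∈ I}), r * F H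
      = ∑ u : ∀ i : {j // j ∈ I}, Xa i.val, ∑ v : ∀ i : {j // j ∈ I}, Xa i.val,
          r / (4 * N) * (margI I z u : ℝ) * (margI I z v : ℝ) *
            (h (margI I z + jump H u v) - h (margI I z)) := by
    intro r H
    rw [hF, Finset.mul_sum]
    refine Finset.sum_congr rfl fun u _ => ?_
    rw [Finset.mul_sum]
    exact Finset.sum_congr rfl fun v _ => by ring
  calc ∑ G : Finset (Fin n), ∑ x : ∀ i, Xa i, ∑ y : ∀ i, Xa i,
        ρ G / (4 * N) * (z x : ℝ) * (z y : ℝ) *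
          (h (margI I z + jump (G.subtype (· ∈ I)) (projI I x) (projI I y)) - h (margI I z))
      = ∑ G : Finset (Fin n), ρ G * F (G.subtype (· ∈ I)) := by
        refine Finset.sum_congr rfl fun G _ => ?_
        rw [hmul]
        exact sum_margI2 I z (ρ G / (4 * N))
          (fun u v => h (margI I z + jump (G.subtype (· ∈ I)) u v) - h (margI I z))
    _ = ∑ H : Finset {j // j ∈ I},
          (∑ G ∈ Finset.univ.filter
            (fun G : Finset (Fin n) => G ∩ I = H.image Subtype.val), ρ G) * F H :=
        sum_fiber I ρ F
    _ = _ := Finset.sum_congr rfl fun H _ => hmul _ H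

lemma mut_eq (μ : ∀ i, Xa i → Xa i → ℝ)
    (h : ((∀ i : {j // j ∈ I}, Xa i.val) → ℤ) → ℝ) (z : (∀ i, Xa i) → ℤ) :
    mutGen μ (fun w => h (margI I w)) z
      = mutGen (fun i : {j // j ∈ I} => μ i.val) h (margI I z) := by
  unfold mutGen
  have hzero : ∀ i ∈ Finset.univ, i ∉ I →
      (∑ x : ∀ j, Xa j, ∑ c : Xa i, μ i (x i) c * (z x : ℝ) *
        (h (margI I (z - delta x + delta (Function.update x i c))) - h (margI I z))) = 0 := by
    intro i _ hi
    refine Finset.sum_eq_zero fun x _ => Finset.sum_eq_zero fun c _ => ?_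
    rw [margI_mut, projI_update_notMem I hi]
    simp
  rw [← Finset.sum_subset (Finset.subset_univ I) hzero,
    Finset.sum_subtype I (fun i => Iff.rfl)]
  refine Finset.sum_congr rfl fun i' _ => ?_
  have key : ∀ (x : ∀ j, Xa j) (c : Xa i'.val),
      margI I (z - delta x + delta (Function.update x i'.val c))
        = margI I z - delta (projI I x)
            + delta (Function.update (projI I x) i' c) := by
    intro x c
    rw [margI_mut, projI_update_mem I i'.2]
  simp only [key]
  calc ∑ x : ∀ j, Xa j, ∑ c : Xa i'.val,
        μ i'.val (x i'.val) c * (z x : ℝ) *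
          (h (margI I z - delta (projI I x)
            + delta (Function.update (projI I x) i' c)) - h (margI I z))
      = ∑ x : ∀ j, Xa j, (z x : ℝ) * ∑ c : Xa i'.val,
          μ i'.val (x i'.val) c *
            (h (margI I z - delta (projI I x)
              + delta (Function.update (projI I x) i' c)) - h (margI I z)) := by
        refine Finset.sum_congr rfl fun x _ => ?_
        rw [Finset.mul_sum]
        exact Finset.sum_congr rfl fun c _ => by ring
    _ = ∑ u : ∀ i : {j // j ∈ I}, Xa i.val, (margI I z u : ℝ) * ∑ c : Xa i'.val,
          μ i'.val (u i') c *
            (h (margI I z - delta u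
              + delta (Function.update u i' c)) - h (margI I z)) :=
        sum_margI I z fun u => ∑ c : Xa i'.val, μ i'.val (u i') c *
          (h (margI I z - delta u + delta (Function.update u i' c)) - h (margI I z))
    _ = _ := by
        refine Finset.sum_congr rfl fun u _ => ?_
        rw [Finset.mul_sum]
        exact Finset.sum_congr rfl fun c _ => by ring

end lemmas

/-- Lumping: for every nonempty `I ⊆ S`, applying the full generator `𝒢 + M + B` to a
function of the marginal configuration equals applying the marginal generator
`𝒢_I + M_I + B_I` (site set `I`, marginal recombination rates
`ρ^{(I)}_H = ∑_{G∩I=H} ρ_G`, mutation rates `μ^i` for `i ∈ I`, same `b`, `N`) to that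
function, evaluated at the marginal configuration.  Hence the marginal process
`(π_I.Z_t)` of the Moran model with recombination, mutation and resampling is itself a
Markov chain of the same type on the site set `I`. -/
theorem lumping (hn : 1 ≤ n)
    [∀ i, Fintype (Xa i)] [∀ i, Nonempty (Xa i)]
    (ρ : Finset (Fin n) → ℝ) (hρ0 : ∀ G, 0 ≤ ρ G) (hρc : ∀ G, ρ G = ρ Gᶜ)
    (hρe : ρ ∅ = 0) (hρu : ρ Finset.univ = 0)
    (μ : ∀ i, Xa i → Xa i → ℝ) (hμ0 : ∀ i a c, 0 ≤ μ i a c) (hμd : ∀ i a, μ i a a = 0)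
    (b N : ℝ) (hb : 0 ≤ b) (hN : 0 < N)
    (I : Finset (Fin n)) (hI : I.Nonempty)
    (h : ((∀ i : {j // j ∈ I}, Xa i.val) → ℤ) → ℝ)
    (z : (∀ i, Xa i) → ℤ) :
    recGen ρ N (fun w => h (margI I w)) z
      + mutGen μ (fun w => h (margI I w)) z
      + resGen b N (fun w => h (margI I w)) z
    = recGen (fun H : Finset {j // j ∈ I} =>
          ∑ G ∈ Finset.univ.filter
            (fun G : Finset (Fin n) => G ∩ I = H.image Subtype.val), ρ G)
        N h (margI I z)
      + mutGen (fun i : {j // j ∈ I} => μ i.val) h (margI I z)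
      + resGen b N h (margI I z) := by
  rw [rec_eq I ρ N h z, mut_eq I μ h z, res_eq I b N h z]

end MoranRecomb
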